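/- Let N ≥ 2 and fix i ∈ {1,…,N−1}. Define the power-sum map F : ℝ^N → ℝ^N by F(x) = (p_1(x),…,p_N(x)) with p_k(x) = Σ_{j=1}^N x_j^k. Let x* ∈ ℝ^N be nondecreasing (x*_1 ≤ … ≤ x*_N) and suppose the pair {i, i+1} is isolated, i.e. x*_{i−1} < x*_i whenever i > 1 and x*_{i+1} < x*_{i+2} whenever i+1 < N (while x*_i = x*_{i+1} is allowed). Then there exist an open set U ⊆ ℝ^N containing F(x*) and a function ψ : ℝ^N → ℝ of class C^∞ on U such that ψ(F(x)) = x_i + x_{i+1} for every nondecreasing x ∈ ℝ^N with F(x) ∈ U. -/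

import Mathlib

open Polynomial Finset

noncomputable section PairSumAux

/-- Newton recursion computing `(-1)^k e_k` from power sums `p 1, p 2, ...`. -/
def newtonA (p : ℕ → ℝ) : ℕ → ℝ
  | 0 => 1
  | (k+1) => -(p (k+1) + ∑ j : Fin k, newtonA p (j+1) * p (k - j)) / (k+1)
  decreasing_by omega

lemma newtonA_congr (p q : ℕ → ℝ) (k : ℕ) (h : ∀ j, 1 ≤ j → j ≤ k → p j = q j) :
    newtonA p k = newtonA q k := by
  induction k using Nat.strong_induction_on with
  | _ k ih =>
    match k with
    | 0 => simp [newtonA]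
    | (k+1) =>
      rw [newtonA, newtonA]
      congr 2
      rw [h (k+1) (by omega) le_rfl]
      congr 1
      apply Finset.sum_congr rfl
      intro j _
      rw [ih (j+1) (by omega) (fun m h1 h2 => h m h1 (by omega)),
        h (k - j) (by omega) (by omega)]

/-- The monic polynomial `X^n + ∑ a_k X^k`. -/
def polyOf (n : ℕ) (a : Fin n → ℝ) : Polynomial ℝ :=
  X ^ n + ∑ k : Fin n, C (a k) * X ^ (k : ℕ)

lemma polyOf_coeff_lt (n : ℕ) (a : Fin n → ℝ) (m : ℕ) (hm : m < n) :
    (polyOf n a).coeff m = a ⟨m, hm⟩ := by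
  rw [polyOf, coeff_add, coeff_X_pow, if_neg (by omega), finset_sum_coeff]
  simp only [coeff_C_mul, coeff_X_pow]
  rw [Finset.sum_eq_single (⟨m, hm⟩ : Fin n)]
  · simp
  · intro b _ hb
    rw [if_neg, mul_zero]
    intro h
    exact hb (by apply Fin.ext; simpa using h.symm)
  · simp

lemma polyOf_coeff_self (n : ℕ) (a : Fin n → ℝ) : (polyOf n a).coeff n = 1 := by
  rw [polyOf, coeff_add, coeff_X_pow, if_pos rfl, finset_sum_coeff]
  simp only [coeff_C_mul, coeff_X_pow]
  rw [Finset.sum_eq_zero]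
  · ring
  · intro b _
    rw [if_neg (by omega), mul_zero]

lemma polyOf_natDegree (n : ℕ) (a : Fin n → ℝ) : (polyOf n a).natDegree = n := by
  have h1 : (polyOf n a).degree ≤ n := by
    rw [polyOf]
    refine (degree_add_le _ _).trans (max_le (degree_X_pow_le n) ?_)
    refine (degree_sum_le _ _).trans ?_
    refine Finset.sup_le fun b _ => ?_
    exact (degree_C_mul_X_pow_le _ _).trans (by exact_mod_cast Nat.cast_le.2 b.2.le)
  have h2 : (polyOf n a).coeff n = 1 := polyOf_coeff_self n a
  have hne : polyOf n a ≠ 0 := fun h => by simp [h] at h2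
  apply le_antisymm (natDegree_le_iff_degree_le.2 h1)
  exact le_natDegree_of_ne_zero (by rw [h2]; exact one_ne_zero)

lemma polyOf_monic (n : ℕ) (a : Fin n → ℝ) : (polyOf n a).Monic := by
  unfold Monic leadingCoeff
  rw [polyOf_natDegree, polyOf_coeff_self]

lemma polyOf_coeff_gt (n : ℕ) (a : Fin n → ℝ) (m : ℕ) (hm : n < m) :
    (polyOf n a).coeff m = 0 :=
  coeff_eq_zero_of_natDegree_lt (by rw [polyOf_natDegree]; exact hm)

/-- Monic polynomials of degree `n` agreeing below `n` are equal. -/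
lemma monic_ext {f g : Polynomial ℝ} (hf : f.Monic) (hg : g.Monic)
    (hfn : f.natDegree = g.natDegree) (h : ∀ m < f.natDegree, f.coeff m = g.coeff m) :
    f = g := by
  ext m
  rcases lt_trichotomy m f.natDegree with hm | hm | hm
  · exact h m hm
  · subst hm
    have := hf.leadingCoeff
    have h2 := hg.leadingCoeff
    rw [leadingCoeff] at this h2
    rw [this, hfn, h2]
  · rw [coeff_eq_zero_of_natDegree_lt hm, coeff_eq_zero_of_natDegree_lt (hfn ▸ hm)]

/-- coefficient vector of `∏ (X - x j)`, indexed by degree. -/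
def coeffVec (n : ℕ) (x : Fin n → ℝ) : Fin n → ℝ :=
  fun k => (∏ j, (X - C (x j))).coeff k

lemma prod_X_sub_C_monic (n : ℕ) (x : Fin n → ℝ) : (∏ j, (X - C (x j))).Monic :=
  monic_prod_of_monic _ _ fun j _ => monic_X_sub_C (x j)

lemma prod_X_sub_C_natDegree (n : ℕ) (x : Fin n → ℝ) :
    (∏ j, (X - C (x j))).natDegree = n := by
  rw [natDegree_prod _ _ fun j _ => X_sub_C_ne_zero (x j)]
  simp [natDegree_X_sub_C]

lemma polyOf_coeffVec (n : ℕ) (x : Fin n → ℝ) :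
    polyOf n (coeffVec n x) = ∏ j, (X - C (x j)) := by
  apply monic_ext (polyOf_monic n _) (prod_X_sub_C_monic n x)
  · rw [polyOf_natDegree, prod_X_sub_C_natDegree]
  · intro m hm
    rw [polyOf_natDegree] at hm
    rw [polyOf_coeff_lt n _ m hm]
    rfl

end PairSumAux

noncomputable section PairSumAux2

def psumR (n : ℕ) (x : Fin n → ℝ) (k : ℕ) : ℝ := ∑ j, x j ^ k

def esymmR (n : ℕ) (x : Fin n → ℝ) (k : ℕ) : ℝ :=
  MvPolynomial.aeval x (MvPolynomial.esymm (Fin n) ℝ k)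

lemma esymmR_zero (n : ℕ) (x : Fin n → ℝ) : esymmR n x 0 = 1 := by
  simp [esymmR, MvPolynomial.esymm]

lemma aeval_psum (n : ℕ) (x : Fin n → ℝ) (k : ℕ) :
    MvPolynomial.aeval x (MvPolynomial.psum (Fin n) ℝ k) = psumR n x k := by
  simp [MvPolynomial.psum, psumR]

/-- Newton's identity over ℝ. -/
lemma newton_real (n : ℕ) (x : Fin n → ℝ) (K : ℕ) :
    (K : ℝ) * esymmR n x K = (-1) ^ (K + 1) *
      ∑ a ∈ (antidiagonal K).filter (fun a => a.1 < K),
        (-1) ^ a.1 * esymmR n x a.1 * psumR n x a.2 := by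
  have h := congrArg (MvPolynomial.aeval x) (MvPolynomial.mul_esymm_eq_sum (Fin n) ℝ K)
  simpa [map_sum, esymmR, aeval_psum, mul_assoc, MvPolynomial.psum, psumR] using h

lemma filter_antidiagonal_sum (K : ℕ) (f : ℕ → ℕ → ℝ) :
    ∑ a ∈ (antidiagonal K).filter (fun a => a.1 < K), f a.1 a.2
      = ∑ i ∈ range K, f i (K - i) := by
  apply Finset.sum_nbij' (fun (a : ℕ × ℕ) => a.1) (fun (i : ℕ) => (i, K - i))
  · intro a ha
    simp only [mem_filter, Finset.HasAntidiagonal.mem_antidiagonal] at ha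
    simpa using ha.2
  · intro i hi
    simp only [mem_range] at hi
    simp only [mem_filter, Finset.HasAntidiagonal.mem_antidiagonal]
    omega
  · intro a ha
    simp only [mem_filter, Finset.HasAntidiagonal.mem_antidiagonal] at ha
    have : K - a.1 = a.2 := by omega
    rw [Prod.ext_iff]
    exact ⟨rfl, this⟩
  · intro i hi
    rfl
  · intro a ha
    simp only [mem_filter, Finset.HasAntidiagonal.mem_antidiagonal] at ha
    have : K - a.1 = a.2 := by omega
    rw [this]

/-- `newtonA` applied to the power sums of `x` computes signed elementary symmetric
functions. -/
lemma newtonA_psumR (n : ℕ) (x : Fin n → ℝ) (k : ℕ) :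
    newtonA (psumR n x) k = (-1) ^ k * esymmR n x k := by
  induction k using Nat.strong_induction_on with
  | _ k ih =>
    match k with
    | 0 => simp [newtonA, esymmR_zero]
    | (k+1) =>
      rw [newtonA, Fin.sum_univ_eq_sum_range (fun j => newtonA (psumR n x) (j+1) * psumR n x (k-j)) k]
      have hsum : ∑ j ∈ range k, newtonA (psumR n x) (j + 1) * psumR n x (k - j)
          = ∑ j ∈ range k, (-1) ^ (j+1) * esymmR n x (j+1) * psumR n x (k - j) := by
        apply Finset.sum_congr rfl
        intro j hj
        rw [ih (j+1) (by simp at hj; omega), mul_assoc]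
      have hnewt := newton_real n x (k+1)
      rw [filter_antidiagonal_sum (k+1)
        (fun a b => (-1) ^ a * esymmR n x a * psumR n x b)] at hnewt
      rw [Finset.sum_range_succ'] at hnewt
      simp only [pow_zero, esymmR_zero, one_mul, Nat.add_sub_cancel] at hnewt
      have hidx : ∀ j ∈ range k, ((-1:ℝ)) ^ (j+1) * esymmR n x (j+1) * psumR n x (k + 1 - (j+1))
          = (-1) ^ (j+1) * esymmR n x (j+1) * psumR n x (k - j) := by
        intro j hj
        congr 2
        omega
      rw [Finset.sum_congr rfl hidx] at hnewt
      rw [hsum]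
      have hKpos : ((k : ℝ) + 1) ≠ 0 := by positivity
      have hpow : ((-1:ℝ)) ^ (k+1+1) = -(-1:ℝ)^(k+1) := by rw [pow_succ]; ring
      rw [hpow] at hnewt
      have hd : ((-1:ℝ))^(k+1) * ((-1:ℝ))^(k+1) = 1 := by
        rw [← pow_add]
        exact Even.neg_one_pow ⟨k+1, by ring⟩
      rw [div_eq_iff hKpos]
      push_cast at hnewt
      linear_combination (-(-1:ℝ)^(k+1)) * hnewt +
        (∑ j ∈ range k, (-1:ℝ) ^ (j+1) * esymmR n x (j+1) * psumR n x (k - j)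
          + psumR n x (k+1)) * hd

end PairSumAux2

noncomputable section PairSumAux3

lemma prod_eq_multiset (n : ℕ) (x : Fin n → ℝ) :
    ∏ j, (X - C (x j)) = ((Finset.univ.val.map x).map fun t => X - C t).prod := by
  rw [Multiset.map_map, Finset.prod]
  rfl

lemma card_univ_val_map (n : ℕ) (x : Fin n → ℝ) :
    Multiset.card (Finset.univ.val.map x) = n := by
  simp

lemma coeffVec_eq_esymmR (n : ℕ) (x : Fin n → ℝ) (m : ℕ) (hm : m < n) :
    coeffVec n x ⟨m, hm⟩ = (-1) ^ (n - m) * esymmR n x (n - m) := by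
  rw [coeffVec, prod_eq_multiset]
  have hcard : m ≤ Multiset.card (Finset.univ.val.map x) := by
    rw [card_univ_val_map]; omega
  rw [Multiset.prod_X_sub_C_coeff _ hcard, card_univ_val_map]
  congr 1
  rw [esymmR, MvPolynomial.aeval_esymm_eq_multiset_esymm]

/-- power sums extended to a function on ℕ. -/
def pext (n : ℕ) (u : Fin n → ℝ) : ℕ → ℝ :=
  fun j => if h : 1 ≤ j ∧ j ≤ n then u ⟨j - 1, by omega⟩ else 0

/-- recover the coefficient vector of the characteristic polynomial from power sums. -/
def CoefOfPS (n : ℕ) (u : Fin n → ℝ) : Fin n → ℝ :=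
  fun k => newtonA (pext n u) (n - k)

lemma CoefOfPS_eq_coeffVec (n : ℕ) (x u : Fin n → ℝ)
    (hu : ∀ k : Fin n, u k = psumR n x ((k : ℕ) + 1)) :
    CoefOfPS n u = coeffVec n x := by
  funext k
  rw [CoefOfPS]
  have h1 : newtonA (pext n u) (n - k)
      = newtonA (psumR n x) (n - k) := by
    apply newtonA_congr
    intro j hj1 hj2
    have hjn : j ≤ n := le_trans hj2 (by omega)
    rw [pext, dif_pos ⟨hj1, hjn⟩, hu]
    have hv : ((⟨j - 1, by omega⟩ : Fin n) : ℕ) = j - 1 := rfl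
    rw [hv]
    congr 1
    omega
  rw [h1, newtonA_psumR]
  have hk : (k : ℕ) < n := k.2
  have : coeffVec n x k = coeffVec n x ⟨(k : ℕ), hk⟩ := rfl
  rw [this, coeffVec_eq_esymmR n x k hk]

lemma monotone_eq_of_coeffVec (n : ℕ) (x y : Fin n → ℝ) (hx : Monotone x) (hy : Monotone y)
    (h : coeffVec n x = coeffVec n y) : x = y := by
  have hpoly : ∏ j, (X - C (x j)) = ∏ j, (X - C (y j)) := by
    rw [← polyOf_coeffVec, ← polyOf_coeffVec, h]
  have hroots : (Finset.univ.val.map x) = (Finset.univ.val.map y) := by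
    have := congrArg Polynomial.roots hpoly
    rwa [prod_eq_multiset, prod_eq_multiset, Polynomial.roots_multiset_prod_X_sub_C,
      Polynomial.roots_multiset_prod_X_sub_C] at this
  have hof : (List.ofFn x : Multiset ℝ) = (List.ofFn y : Multiset ℝ) := by
    have hx1 : (List.ofFn x : Multiset ℝ) = Finset.univ.val.map x := by
      rw [List.ofFn_eq_map]
      rfl
    have hy1 : (List.ofFn y : Multiset ℝ) = Finset.univ.val.map y := by
      rw [List.ofFn_eq_map]
      rfl
    rw [hx1, hy1, hroots]
  have hperm := Multiset.coe_eq_coe.mp hof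
  have := List.Perm.eq_of_sortedLE hx.sortedLE_ofFn hy.sortedLE_ofFn hperm
  exact List.ofFn_injective this

end PairSumAux3

noncomputable section PairSumAux4

lemma contDiff_pext (n : ℕ) (q : ℕ) :
    ContDiff ℝ (⊤ : ℕ∞) (fun u : Fin n → ℝ => pext n u q) := by
  unfold pext
  split_ifs with h
  · exact (ContinuousLinearMap.proj (R := ℝ) (φ := fun _ : Fin n => ℝ)
      ⟨q - 1, by omega⟩).contDiff
  · exact contDiff_const

lemma newtonA_zero (p : ℕ → ℝ) : newtonA p 0 = 1 := by rw [newtonA]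

lemma newtonA_succ (p : ℕ → ℝ) (k : ℕ) :
    newtonA p (k+1) = -(p (k+1) + ∑ j : Fin k, newtonA p (j+1) * p (k - j)) / (k+1) := by
  rw [newtonA]

lemma contDiff_newtonA_pext (n : ℕ) (m : ℕ) :
    ContDiff ℝ (⊤ : ℕ∞) (fun u : Fin n → ℝ => newtonA (pext n u) m) := by
  induction m using Nat.strong_induction_on with
  | _ m ih =>
    match m with
    | 0 =>
      have h0 : (fun u : Fin n → ℝ => newtonA (pext n u) 0) = fun _ => (1:ℝ) :=
        funext fun u => newtonA_zero _
      rw [h0]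
      exact contDiff_const
    | (k+1) =>
      have hs : (fun u : Fin n → ℝ => newtonA (pext n u) (k+1))
          = fun u => -(pext n u (k+1) + ∑ j : Fin k, newtonA (pext n u) (j+1)
              * pext n u (k - j)) / (k+1) :=
        funext fun u => newtonA_succ _ k
      rw [hs]
      apply ContDiff.div_const
      apply ContDiff.neg
      apply ContDiff.add (contDiff_pext n (k+1))
      apply ContDiff.sum
      intro j _
      exact ((ih (j+1) (by omega))).mul (contDiff_pext n (k - j))

lemma contDiff_CoefOfPS (n : ℕ) : ContDiff ℝ (⊤ : ℕ∞) (CoefOfPS n) := by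
  apply contDiff_pi.2
  intro k
  exact contDiff_newtonA_pext n (n - k)

end PairSumAux4

noncomputable section PairSumAux5

/-- lower-order part: `∑ a_k X^k`. -/
def lind (n : ℕ) (a : Fin n → ℝ) : Polynomial ℝ :=
  ∑ k : Fin n, C (a k) * X ^ (k : ℕ)

lemma polyOf_eq_lind (n : ℕ) (a : Fin n → ℝ) : polyOf n a = X ^ n + lind n a := rfl

lemma lind_coeff_lt (n : ℕ) (a : Fin n → ℝ) (m : ℕ) (hm : m < n) :
    (lind n a).coeff m = a ⟨m, hm⟩ := by
  have h := polyOf_coeff_lt n a m hm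
  rw [polyOf_eq_lind, coeff_add, coeff_X_pow, if_neg (by omega)] at h
  simpa using h

lemma lind_degree_lt (n : ℕ) (a : Fin n → ℝ) : (lind n a).degree < (n : WithBot ℕ) := by
  apply lt_of_le_of_lt (degree_sum_le _ _)
  apply Finset.sup_lt_iff (by exact WithBot.bot_lt_coe n) |>.2
  intro b _
  exact lt_of_le_of_lt (degree_C_mul_X_pow_le _ _) (by exact_mod_cast b.2)

lemma lind_add (n : ℕ) (a b : Fin n → ℝ) : lind n (a + b) = lind n a + lind n b := by
  rw [lind, lind, lind, ← Finset.sum_add_distrib]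
  congr 1
  funext k
  simp [C_add, add_mul]

lemma lind_smul (n : ℕ) (c : ℝ) (a : Fin n → ℝ) : lind n (c • a) = c • lind n a := by
  rw [lind, lind, Finset.smul_sum]
  congr 1
  funext k
  simp [smul_eq_C_mul, mul_assoc]

lemma lind_eq_zero_iff (n : ℕ) (a : Fin n → ℝ) : lind n a = 0 ↔ a = 0 := by
  constructor
  · intro h
    funext k
    have := lind_coeff_lt n a k k.2
    rw [h, coeff_zero] at this
    simp [← this]
  · intro h; rw [h, lind]; simp

variable (n : ℕ)

/-- index embedding for the `R`-part coefficients. -/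
def jdx (j : Fin n) : Fin (n + 2) := ⟨(j : ℕ) + 2, by omega⟩

def vq (v : Fin (n + 2) → ℝ) : Fin 2 → ℝ := fun t => v (Fin.castLE (by omega) t)

def vr (v : Fin (n + 2) → ℝ) : Fin n → ℝ := fun j => v (jdx n j)

def qpoly (v : Fin (n + 2) → ℝ) : Polynomial ℝ := polyOf 2 (vq n v)

def rpoly (v : Fin (n + 2) → ℝ) : Polynomial ℝ := polyOf n (vr n v)

/-- the coefficient-multiplication map. -/
def CoefM (v : Fin (n + 2) → ℝ) : Fin (n + 2) → ℝ :=
  fun k => (qpoly n v * rpoly n v).coeff k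

/-- the candidate derivative of `CoefM` at `vstar`, as a plain function. -/
def Dfun (vstar : Fin (n+2) → ℝ) (δ : Fin (n+2) → ℝ) : Fin (n+2) → ℝ :=
  fun k => (qpoly n vstar * lind n (vr n δ) + lind 2 (vq n δ) * rpoly n vstar).coeff k

def Bfun (δ₁ δ₂ : Fin (n+2) → ℝ) : Fin (n+2) → ℝ :=
  fun k => (lind 2 (vq n δ₁) * lind n (vr n δ₂)).coeff k

lemma CoefM_expand (vstar v : Fin (n+2) → ℝ) :
    CoefM n v = CoefM n vstar + Dfun n vstar (v - vstar) + Bfun n (v - vstar) (v - vstar) := by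
  funext k
  have hq : qpoly n v = qpoly n vstar + lind 2 (vq n (v - vstar)) := by
    rw [qpoly, qpoly, polyOf_eq_lind, polyOf_eq_lind]
    have : vq n v = vq n vstar + vq n (v - vstar) := by
      funext t; simp [vq]
    rw [this, lind_add]
    ring
  have hr : rpoly n v = rpoly n vstar + lind n (vr n (v - vstar)) := by
    rw [rpoly, rpoly, polyOf_eq_lind, polyOf_eq_lind]
    have : vr n v = vr n vstar + vr n (v - vstar) := by
      funext t; simp [vr]
    rw [this, lind_add]
    ring
  show (qpoly n v * rpoly n v).coeff k = _
  rw [hq, hr]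
  have : (qpoly n vstar + lind 2 (vq n (v - vstar))) * (rpoly n vstar + lind n (vr n (v - vstar)))
      = qpoly n vstar * rpoly n vstar
        + (qpoly n vstar * lind n (vr n (v - vstar)) + lind 2 (vq n (v - vstar)) * rpoly n vstar)
        + lind 2 (vq n (v - vstar)) * lind n (vr n (v - vstar)) := by ring
  rw [this, coeff_add, coeff_add]
  rfl

/-- injectivity of the derivative, given coprimality. -/
lemma Dfun_injective (vstar : Fin (n+2) → ℝ)
    (hcop : IsCoprime (qpoly n vstar) (rpoly n vstar)) (δ : Fin (n+2) → ℝ)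
    (h : Dfun n vstar δ = 0) : δ = 0 := by
  set Q := qpoly n vstar with hQ
  set R := rpoly n vstar with hR
  set lq := lind 2 (vq n δ) with hlq
  set lr := lind n (vr n δ) with hlr
  have hQmonic : Q.Monic := polyOf_monic 2 _
  have hQdeg : Q.degree = 2 := by
    have := polyOf_natDegree 2 (vq n vstar)
    rw [hQ, qpoly, degree_eq_natDegree (polyOf_monic 2 _).ne_zero, this]
    rfl
  have hRdeg : R.degree = n := by
    have := polyOf_natDegree n (vr n vstar)
    rw [hR, rpoly, degree_eq_natDegree (polyOf_monic n _).ne_zero, this]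
  -- the polynomial W is zero
  have hW : Q * lr + lq * R = 0 := by
    have hdeg : (Q * lr + lq * R).degree < ((n + 2 : ℕ) : WithBot ℕ) := by
      apply lt_of_le_of_lt (degree_add_le _ _)
      apply max_lt
      · apply lt_of_le_of_lt (degree_mul_le _ _)
        rw [hQdeg]
        calc (2 : WithBot ℕ) + lr.degree < 2 + (n : WithBot ℕ) := by
              apply WithBot.add_lt_add_left (by simp) (lind_degree_lt _ _)
          _ = ((n + 2 : ℕ) : WithBot ℕ) := by
              push_cast; ring
      · apply lt_of_le_of_lt (degree_mul_le _ _)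
        rw [hRdeg]
        calc lq.degree + (n : WithBot ℕ) < 2 + (n : WithBot ℕ) := by
              apply WithBot.add_lt_add_right (by simp) (lind_degree_lt _ _)
          _ = ((n + 2 : ℕ) : WithBot ℕ) := by push_cast; ring
    ext m
    rcases lt_or_ge m (n + 2) with hm | hm
    · have := congrFun h ⟨m, hm⟩
      simpa [Dfun] using this
    · rw [coeff_eq_zero_of_degree_lt (lt_of_lt_of_le hdeg (by exact_mod_cast hm)), coeff_zero]
  have hdvd : Q ∣ lq * R := ⟨-lr, by linear_combination hW⟩
  have hdvd2 : Q ∣ lq := hcop.dvd_of_dvd_mul_right hdvd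
  have hlq0 : lq = 0 := by
    by_contra hne
    have := degree_le_of_dvd hdvd2 hne
    rw [hQdeg] at this
    exact absurd (lt_of_le_of_lt this (lind_degree_lt 2 _)) (lt_irrefl _)
  have hlr0 : lr = 0 := by
    rw [hlq0, zero_mul, add_zero] at hW
    rcases mul_eq_zero.1 hW with h1 | h1
    · exact absurd h1 hQmonic.ne_zero
    · exact h1
  have hvq : vq n δ = 0 := (lind_eq_zero_iff 2 _).1 hlq0
  have hvr : vr n δ = 0 := (lind_eq_zero_iff n _).1 hlr0
  funext k
  rcases lt_or_ge (k : ℕ) 2 with hk | hk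
  · have := congrFun hvq ⟨k, hk⟩
    simpa [vq, Fin.castLE, Fin.ext_iff] using this.trans rfl
  · have hk2 : (k : ℕ) - 2 < n := by omega
    have := congrFun hvr ⟨(k : ℕ) - 2, hk2⟩
    have heq : jdx n ⟨(k : ℕ) - 2, hk2⟩ = k := by
      apply Fin.ext
      simp [jdx]
      omega
    rw [vr, heq] at this
    exact this

end PairSumAux5

noncomputable section PairSumAux6

variable (n : ℕ)

lemma Bfun_add_left (a b d : Fin (n+2) → ℝ) :
    Bfun n (a + b) d = Bfun n a d + Bfun n b d := by
  funext k
  show (lind 2 (vq n (a+b)) * lind n (vr n d)).coeff k = _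
  rw [show vq n (a + b) = vq n a + vq n b from rfl, lind_add, add_mul, coeff_add]
  rfl

lemma Bfun_add_right (d a b : Fin (n+2) → ℝ) :
    Bfun n d (a + b) = Bfun n d a + Bfun n d b := by
  funext k
  show (lind 2 (vq n d) * lind n (vr n (a+b))).coeff k = _
  rw [show vr n (a + b) = vr n a + vr n b from rfl, lind_add, mul_add, coeff_add]
  rfl

lemma Bfun_smul_left (c : ℝ) (a d : Fin (n+2) → ℝ) :
    Bfun n (c • a) d = c • Bfun n a d := by
  funext k
  show (lind 2 (vq n (c • a)) * lind n (vr n d)).coeff k = _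
  rw [show vq n (c • a) = c • vq n a from rfl, lind_smul, smul_mul_assoc, coeff_smul]
  rfl

lemma Bfun_smul_right (c : ℝ) (d a : Fin (n+2) → ℝ) :
    Bfun n d (c • a) = c • Bfun n d a := by
  funext k
  show (lind 2 (vq n d) * lind n (vr n (c • a))).coeff k = _
  rw [show vr n (c • a) = c • vr n a from rfl, lind_smul, mul_smul_comm, coeff_smul]
  rfl

lemma Bfun_zero_left (d : Fin (n+2) → ℝ) : Bfun n 0 d = 0 := by
  funext k
  show (lind 2 (vq n 0) * lind n (vr n d)).coeff k = 0
  rw [show vq n (0 : Fin (n+2) → ℝ) = 0 from rfl, (lind_eq_zero_iff 2 0).2 rfl, zero_mul]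
  simp

lemma Bfun_zero_right (d : Fin (n+2) → ℝ) : Bfun n d 0 = 0 := by
  funext k
  show (lind 2 (vq n d) * lind n (vr n 0)).coeff k = 0
  rw [show vr n (0 : Fin (n+2) → ℝ) = 0 from rfl, (lind_eq_zero_iff n 0).2 rfl, mul_zero]
  simp

/-- the derivative as a linear map. -/
def Dlin (vstar : Fin (n+2) → ℝ) : (Fin (n+2) → ℝ) →ₗ[ℝ] (Fin (n+2) → ℝ) where
  toFun := Dfun n vstar
  map_add' a b := by
    funext k
    show (qpoly n vstar * lind n (vr n (a+b)) + lind 2 (vq n (a+b)) * rpoly n vstar).coeff k = _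
    rw [show vr n (a + b) = vr n a + vr n b from rfl,
      show vq n (a + b) = vq n a + vq n b from rfl, lind_add, lind_add]
    have : qpoly n vstar * (lind n (vr n a) + lind n (vr n b))
        + (lind 2 (vq n a) + lind 2 (vq n b)) * rpoly n vstar
        = (qpoly n vstar * lind n (vr n a) + lind 2 (vq n a) * rpoly n vstar)
          + (qpoly n vstar * lind n (vr n b) + lind 2 (vq n b) * rpoly n vstar) := by ring
    rw [this, coeff_add]
    rfl
  map_smul' c a := by
    funext k
    show (qpoly n vstar * lind n (vr n (c • a)) + lind 2 (vq n (c • a)) * rpoly n vstar).coeff k = _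
    rw [show vr n (c • a) = c • vr n a from rfl,
      show vq n (c • a) = c • vq n a from rfl, lind_smul, lind_smul]
    have : qpoly n vstar * (c • lind n (vr n a)) + (c • lind 2 (vq n a)) * rpoly n vstar
        = c • (qpoly n vstar * lind n (vr n a) + lind 2 (vq n a) * rpoly n vstar) := by
      rw [mul_smul_comm, smul_mul_assoc, smul_add]
    rw [this, coeff_smul]
    rfl

/-- the derivative as a continuous linear equivalence, given coprimality. -/
def Dcle (vstar : Fin (n+2) → ℝ)
    (hcop : IsCoprime (qpoly n vstar) (rpoly n vstar)) :
    (Fin (n+2) → ℝ) ≃L[ℝ] (Fin (n+2) → ℝ) := by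
  have hinj : Function.Injective (Dlin n vstar) := by
    rw [← LinearMap.ker_eq_bot]
    apply LinearMap.ker_eq_bot'.2
    intro m hm
    exact Dfun_injective n vstar hcop m hm
  have hsurj : Function.Surjective (Dlin n vstar) :=
    LinearMap.injective_iff_surjective.1 hinj
  exact (LinearEquiv.ofBijective (Dlin n vstar) ⟨hinj, hsurj⟩).toContinuousLinearEquiv

/-- the bilinear part, as a continuous bilinear map. -/
def Bcl : (Fin (n+2) → ℝ) →L[ℝ] (Fin (n+2) → ℝ) →L[ℝ] (Fin (n+2) → ℝ) := by
  have Blin2 : (Fin (n+2) → ℝ) →ₗ[ℝ] (Fin (n+2) → ℝ) →ₗ[ℝ] (Fin (n+2) → ℝ) :=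
    LinearMap.mk₂ ℝ (Bfun n) (Bfun_add_left n) (fun c a d => Bfun_smul_left n c a d)
      (Bfun_add_right n) (fun c d a => Bfun_smul_right n c d a)
  exact LinearMap.toContinuousLinearMap
    ((LinearMap.toContinuousLinearMap :
        ((Fin (n+2) → ℝ) →ₗ[ℝ] (Fin (n+2) → ℝ)) ≃ₗ[ℝ] _).toLinearMap.comp Blin2)

lemma Bcl_apply (d₁ d₂ : Fin (n+2) → ℝ) : Bcl n d₁ d₂ = Bfun n d₁ d₂ := rfl

/-- smoothness of coefficients of `polyOf` composed with an index embedding. -/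
lemma contDiff_polyOf_coeff (m : ℕ) (emb : Fin m → Fin (n+2)) (q : ℕ) :
    ContDiff ℝ (⊤ : WithTop ℕ∞) (fun v : Fin (n+2) → ℝ => (polyOf m (fun j => v (emb j))).coeff q) := by
  rcases lt_trichotomy q m with hq | hq | hq
  · have : (fun v : Fin (n+2) → ℝ => (polyOf m (fun j => v (emb j))).coeff q)
        = fun v => v (emb ⟨q, hq⟩) := by
      funext v
      rw [polyOf_coeff_lt m _ q hq]
    rw [this]
    exact (ContinuousLinearMap.proj (R := ℝ) (φ := fun _ : Fin (n+2) => ℝ) (emb ⟨q, hq⟩)).contDiff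
  · subst hq
    have : (fun v : Fin (n+2) → ℝ => (polyOf q (fun j => v (emb j))).coeff q)
        = fun _ => (1:ℝ) := by
      funext v
      rw [polyOf_coeff_self]
    rw [this]
    exact contDiff_const
  · have : (fun v : Fin (n+2) → ℝ => (polyOf m (fun j => v (emb j))).coeff q)
        = fun _ => (0:ℝ) := by
      funext v
      rw [polyOf_coeff_gt m _ q hq]
    rw [this]
    exact contDiff_const

lemma contDiff_CoefM : ContDiff ℝ (⊤ : WithTop ℕ∞) (CoefM n) := by
  apply contDiff_pi.2
  intro k
  have : (fun v : Fin (n+2) → ℝ => CoefM n v k)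
      = fun v => ∑ p ∈ antidiagonal (k : ℕ),
          (polyOf 2 (fun t => v (Fin.castLE (by omega) t))).coeff p.1
            * (polyOf n (fun j => v (jdx n j))).coeff p.2 := by
    funext v
    rw [CoefM, qpoly, rpoly, coeff_mul]
    rfl
  rw [this]
  apply ContDiff.sum
  intro p _
  exact (contDiff_polyOf_coeff n 2 _ p.1).mul (contDiff_polyOf_coeff n n _ p.2)

lemma hasStrictFDerivAt_CoefM (vstar : Fin (n+2) → ℝ)
    (hcop : IsCoprime (qpoly n vstar) (rpoly n vstar)) :
    HasStrictFDerivAt (CoefM n)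
      ((Dcle n vstar hcop : (Fin (n+2) → ℝ) →L[ℝ] (Fin (n+2) → ℝ))) vstar := by
  have hexp : CoefM n = fun v => CoefM n vstar + Dfun n vstar (v - vstar)
      + Bcl n (v - vstar) (v - vstar) := by
    funext v
    rw [CoefM_expand n vstar v, Bcl_apply]
  rw [hexp]
  -- quadratic part
  have hinner : HasStrictFDerivAt (fun v : Fin (n+2) → ℝ => (v - vstar, v - vstar))
      ((ContinuousLinearMap.id ℝ (Fin (n+2) → ℝ)).prod
        (ContinuousLinearMap.id ℝ (Fin (n+2) → ℝ))) vstar :=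
    HasStrictFDerivAt.prodMk (((hasStrictFDerivAt_id vstar).sub_const vstar))
      (((hasStrictFDerivAt_id vstar).sub_const vstar))
  have hbb := (Bcl n).isBoundedBilinearMap.hasStrictFDerivAt (vstar - vstar, vstar - vstar)
  have hg := hbb.comp vstar hinner
  have hg0 : HasStrictFDerivAt (fun v : Fin (n+2) → ℝ => Bcl n (v - vstar) (v - vstar))
      (0 : (Fin (n+2) → ℝ) →L[ℝ] (Fin (n+2) → ℝ)) vstar := by
    refine hg.congr_fderiv ?_
    ext δ
    simp only [ContinuousLinearMap.zero_apply, ContinuousLinearMap.comp_apply,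
      ContinuousLinearMap.prod_apply, ContinuousLinearMap.id_apply]
    rw [IsBoundedBilinearMap.deriv_apply]
    simp only [sub_self]
    simp [Bcl_apply, Bfun_zero_left, Bfun_zero_right]
  -- linear part
  have hlin : HasStrictFDerivAt (fun v : Fin (n+2) → ℝ => Dfun n vstar (v - vstar))
      ((Dcle n vstar hcop : (Fin (n+2) → ℝ) →L[ℝ] (Fin (n+2) → ℝ))) vstar := by
    have heq : (fun v : Fin (n+2) → ℝ => Dfun n vstar (v - vstar))
        = fun v : Fin (n+2) → ℝ =>
            (Dcle n vstar hcop : (Fin (n+2) → ℝ) →L[ℝ] (Fin (n+2) → ℝ)) v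
            - (Dcle n vstar hcop : (Fin (n+2) → ℝ) →L[ℝ] (Fin (n+2) → ℝ)) vstar := by
      funext v
      exact (Dlin n vstar).map_sub v vstar
    rw [heq]
    exact ((Dcle n vstar hcop : (Fin (n+2) → ℝ) →L[ℝ] (Fin (n+2) → ℝ)).hasStrictFDerivAt).sub_const _
  have hconst : HasStrictFDerivAt (fun _ : Fin (n+2) → ℝ => CoefM n vstar)
      (0 : (Fin (n+2) → ℝ) →L[ℝ] (Fin (n+2) → ℝ)) vstar := hasStrictFDerivAt_const _ _
  have := (hconst.add hlin).add hg0
  exact this.congr_fderiv (by simp)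

/-- The inverse-function-theorem package for `CoefM`. -/
lemma CoefM_localInverse (vstar : Fin (n+2) → ℝ)
    (hcop : IsCoprime (qpoly n vstar) (rpoly n vstar)) :
    ∃ W : Set (Fin (n+2) → ℝ), IsOpen W ∧ CoefM n vstar ∈ W ∧
      ∃ Γ : (Fin (n+2) → ℝ) → (Fin (n+2) → ℝ), ContDiffOn ℝ (⊤ : ℕ∞) Γ W ∧
        ∃ V : Set (Fin (n+2) → ℝ), IsOpen V ∧ vstar ∈ V ∧
          ∀ v ∈ V, Γ (CoefM n v) = v := by
  have hcm : ContDiffAt ℝ (⊤ : WithTop ℕ∞) (CoefM n) vstar := (contDiff_CoefM n).contDiffAt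
  have hf' : HasFDerivAt (CoefM n)
      ((Dcle n vstar hcop : (Fin (n+2) → ℝ) →L[ℝ] (Fin (n+2) → ℝ))) vstar :=
    (hasStrictFDerivAt_CoefM n vstar hcop).hasFDerivAt
  set Γ := hcm.localInverse hf' (by simp) with hΓdef
  have hΓsmooth : ContDiffAt ℝ (⊤ : WithTop ℕ∞) Γ (CoefM n vstar) := hcm.to_localInverse hf' (by simp)
  obtain ⟨u, hu, hcd⟩ := hΓsmooth.contDiffOn le_rfl (fun _ => rfl)
  obtain ⟨W, hWu, hWopen, hWmem⟩ := mem_nhds_iff.1 hu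
  have hleft : ∀ᶠ v in nhds vstar, Γ (CoefM n v) = v :=
    (hcm.hasStrictFDerivAt' hf' (by simp)).eventually_left_inverse
  obtain ⟨V, hVsub, hVopen, hVmem⟩ := mem_nhds_iff.1 hleft
  exact ⟨W, hWopen, hWmem, Γ, (hcd.mono hWu).of_le le_top, V, hVopen, hVmem, fun v hv => hVsub hv⟩

end PairSumAux6

noncomputable section PairSumAux7

lemma continuous_esymmR (n : ℕ) (k : ℕ) : Continuous fun x : Fin n → ℝ => esymmR n x k := by
  have : (fun x : Fin n → ℝ => esymmR n x k)
      = fun x => MvPolynomial.eval x (MvPolynomial.esymm (Fin n) ℝ k) := by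
    funext x
    rw [esymmR, MvPolynomial.aeval_def, MvPolynomial.eval, MvPolynomial.eval₂Hom_congr rfl rfl rfl]
    rfl
  rw [this]
  exact MvPolynomial.continuous_eval _

lemma continuous_coeffVec (n : ℕ) (k : Fin n) :
    Continuous fun x : Fin n → ℝ => coeffVec n x k := by
  have : (fun x : Fin n → ℝ => coeffVec n x k)
      = fun x => (-1) ^ (n - (k : ℕ)) * esymmR n x (n - (k : ℕ)) := by
    funext x
    exact coeffVec_eq_esymmR n x k k.2
  rw [this]
  exact continuous_const.mul (continuous_esymmR n _)

variable (n : ℕ) (i : ℕ) (hi : i + 1 < n + 2)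

/-- the embedding of the remaining indices, skipping `i` and `i+1`. -/
def embd (j : Fin n) : Fin (n + 2) :=
  if (j : ℕ) < i then ⟨j, by omega⟩ else ⟨(j : ℕ) + 2, by omega⟩

lemma embd_injective : Function.Injective (embd n i) := by
  intro a b h
  unfold embd at h
  split_ifs at h with h1 h2 h2 <;> rw [Fin.ext_iff] at h ⊢ <;> simp at h <;> omega

lemma embd_ne_i (j : Fin n) : (embd n i j : ℕ) ≠ i := by
  unfold embd
  split_ifs with h1 <;> simp <;> omega

lemma embd_ne_i1 (j : Fin n) : (embd n i j : ℕ) ≠ i + 1 := by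
  unfold embd
  split_ifs with h1 <;> simp <;> omega

/-- the "true coordinates" map. -/
def Tmap (x : Fin (n + 2) → ℝ) : Fin (n + 2) → ℝ :=
  fun k =>
    if (k : ℕ) = 0 then x ⟨i, by omega⟩ * x ⟨i + 1, hi⟩
    else if (k : ℕ) = 1 then -(x ⟨i, by omega⟩ + x ⟨i + 1, hi⟩)
    else if h2 : (k : ℕ) - 2 < n then coeffVec n (fun j => x (embd n i j)) ⟨(k : ℕ) - 2, h2⟩
    else 0

lemma continuous_Tmap : Continuous (Tmap n i hi) := by
  refine continuous_pi fun k => ?_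
  by_cases h0 : (k : ℕ) = 0
  · have : (fun x => Tmap n i hi x k)
        = fun x : Fin (n+2) → ℝ => x ⟨i, by omega⟩ * x ⟨i + 1, hi⟩ := by
      funext x; rw [Tmap, if_pos h0]
    rw [this]
    exact (continuous_apply _).mul (continuous_apply _)
  · by_cases h1 : (k : ℕ) = 1
    · have : (fun x => Tmap n i hi x k)
          = fun x : Fin (n+2) → ℝ => -(x ⟨i, by omega⟩ + x ⟨i + 1, hi⟩) := by
        funext x; rw [Tmap, if_neg h0, if_pos h1]
      rw [this]
      exact ((continuous_apply (⟨i, by omega⟩ : Fin (n+2))).add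
        (continuous_apply (⟨i+1, hi⟩ : Fin (n+2)))).neg
    · have h2 : (k : ℕ) - 2 < n := by
        have := k.2
        omega
      have : (fun x => Tmap n i hi x k)
          = fun x : Fin (n+2) → ℝ =>
              coeffVec n (fun j => x (embd n i j)) ⟨(k : ℕ) - 2, h2⟩ := by
        funext x; rw [Tmap, if_neg h0, if_neg h1, dif_pos h2]
      rw [this]
      exact (continuous_coeffVec n _).comp (continuous_pi fun j => continuous_apply _)

lemma qpoly_Tmap (x : Fin (n + 2) → ℝ) :
    qpoly n (Tmap n i hi x) = (X - C (x ⟨i, by omega⟩)) * (X - C (x ⟨i + 1, hi⟩)) := by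
  set a := x ⟨i, by omega⟩
  set b := x ⟨i + 1, hi⟩
  have h0 : vq n (Tmap n i hi x) 0 = a * b := by
    show Tmap n i hi x (Fin.castLE (by omega) 0) = a * b
    have hv : ((Fin.castLE (show 2 ≤ n + 2 by omega) (0 : Fin 2) : Fin (n+2)) : ℕ) = 0 := rfl
    rw [Tmap, if_pos hv]
  have h1 : vq n (Tmap n i hi x) 1 = -(a + b) := by
    show Tmap n i hi x (Fin.castLE (by omega) 1) = -(a + b)
    have hv : ((Fin.castLE (show 2 ≤ n + 2 by omega) (1 : Fin 2) : Fin (n+2)) : ℕ) = 1 := rfl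
    rw [Tmap, if_neg (by rw [hv]; omega), if_pos hv]
  rw [qpoly, polyOf]
  rw [Fin.sum_univ_two]
  rw [h0, h1, C_mul, map_neg, C_add]
  have e0 : (((0 : Fin 2) : ℕ)) = 0 := rfl
  have e1 : (((1 : Fin 2) : ℕ)) = 1 := rfl
  rw [e0, e1]
  ring

lemma rpoly_Tmap (x : Fin (n + 2) → ℝ) :
    rpoly n (Tmap n i hi x) = ∏ j : Fin n, (X - C (x (embd n i j))) := by
  have hv : vr n (Tmap n i hi x) = coeffVec n (fun j => x (embd n i j)) := by
    funext j
    show Tmap n i hi x (jdx n j) = _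
    have hj : ((jdx n j : Fin (n+2)) : ℕ) = (j : ℕ) + 2 := rfl
    have h2 : ((jdx n j : Fin (n+2)) : ℕ) - 2 < n := by
      rw [hj]; simp only [Nat.add_sub_cancel]; exact j.2
    rw [Tmap, if_neg (by omega), if_neg (by omega), dif_pos h2]
    congr 1
  rw [rpoly, hv, polyOf_coeffVec]

lemma prod_split (x : Fin (n + 2) → ℝ) (f : ℝ → Polynomial ℝ) :
    ∏ k : Fin (n + 2), f (x k)
      = f (x ⟨i, by omega⟩) * f (x ⟨i + 1, hi⟩) * ∏ j : Fin n, f (x (embd n i j)) := by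
  classical
  set i0 : Fin (n+2) := ⟨i, by omega⟩
  set i1 : Fin (n+2) := ⟨i + 1, hi⟩
  set s : Finset (Fin (n+2)) := Finset.image (embd n i) univ with hs
  have hi0s : i0 ∉ s := by
    simp only [hs, Finset.mem_image]
    rintro ⟨j, -, hj⟩
    exact embd_ne_i n i j (by rw [hj])
  have hi1s : i1 ∉ s := by
    simp only [hs, Finset.mem_image]
    rintro ⟨j, -, hj⟩
    exact embd_ne_i1 n i j (by rw [hj])
  have hne : i0 ≠ i1 := by
    simp only [i0, i1, ne_eq, Fin.mk.injEq]
    omega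
  have hcard : s.card = n := by
    rw [hs, Finset.card_image_of_injective _ (embd_injective n i), card_univ, Fintype.card_fin]
  have huniv : insert i0 (insert i1 s) = univ := by
    apply Finset.eq_univ_of_card
    rw [Finset.card_insert_of_notMem, Finset.card_insert_of_notMem hi1s, hcard,
      Fintype.card_fin]
    simp only [Finset.mem_insert]
    push_neg
    exact ⟨hne, hi0s⟩
  rw [← huniv, Finset.prod_insert, Finset.prod_insert hi1s, hs,
    Finset.prod_image (fun a _ b _ h => embd_injective n i h), ← mul_assoc]
  simp only [Finset.mem_insert]
  push_neg
  exact ⟨hne, hi0s⟩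

lemma CoefM_Tmap (x : Fin (n + 2) → ℝ) :
    CoefM n (Tmap n i hi x) = coeffVec (n + 2) x := by
  funext k
  rw [CoefM, qpoly_Tmap, rpoly_Tmap, coeffVec,
    prod_split n i hi x (fun t => X - C t)]

end PairSumAux7

/-- Smoothness of an isolated pair-sum of ordered roots as a function of the power
sums: if `x*` is nondecreasing and the pair of coordinates `i, i+1` (zero-based)
is strictly separated from all other coordinates (the two coordinates themselves
may coincide), then there is a neighborhood `U` of `F(x*)` (where
`F(x) k = ∑_j x_j^(k+1)` are the first `N` power sums) and a `C^∞` function `ψ`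
on `U` with `ψ(F(x)) = x i + x (i+1)` for every nondecreasing `x` with
`F(x) ∈ U`. -/
theorem smooth_pair_sum_of_powerSums (N : ℕ) (hN : 2 ≤ N) (i : ℕ) (hi : i + 1 < N)
    (F : (Fin N → ℝ) → (Fin N → ℝ))
    (hF : ∀ (x : Fin N → ℝ) (k : Fin N), F x k = ∑ j, x j ^ ((k : ℕ) + 1))
    (xs : Fin N → ℝ) (hmono : Monotone xs)
    (hleft : ∀ j : Fin N, (j : ℕ) + 1 = i → xs j < xs ⟨i, by omega⟩)
    (hright : ∀ j : Fin N, (j : ℕ) = i + 2 → xs ⟨i + 1, hi⟩ < xs j) :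
    ∃ U : Set (Fin N → ℝ), IsOpen U ∧ F xs ∈ U ∧
      ∃ ψ : (Fin N → ℝ) → ℝ, ContDiffOn ℝ (⊤ : ℕ∞) ψ U ∧
        ∀ x : Fin N → ℝ, Monotone x → F x ∈ U →
          ψ (F x) = x ⟨i, by omega⟩ + x ⟨i + 1, hi⟩ := by
  obtain ⟨n, rfl⟩ : ∃ n, N = n + 2 := ⟨N - 2, by omega⟩
  have hi0lt : i < n + 2 := by omega
  set i0 : Fin (n + 2) := ⟨i, hi0lt⟩ with hi0
  set i1 : Fin (n + 2) := ⟨i + 1, hi⟩ with hi1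
  -- F in explicit form
  have hFx : ∀ x : Fin (n+2) → ℝ, ∀ k : Fin (n+2), F x k = psumR (n+2) x ((k : ℕ) + 1) := by
    intro x k
    rw [hF]
    rfl
  have hFcont : Continuous F := by
    have hFeq : F = fun x (k : Fin (n+2)) => psumR (n+2) x ((k : ℕ) + 1) := by
      funext x k
      exact hFx x k
    rw [hFeq]
    refine continuous_pi fun k => ?_
    unfold psumR
    exact continuous_finset_sum _ fun j _ => (continuous_apply j).pow _
  have hCoefPS : ∀ x : Fin (n+2) → ℝ, CoefOfPS (n+2) (F x) = coeffVec (n+2) x := by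
    intro x
    exact CoefOfPS_eq_coeffVec (n+2) x (F x) (hFx x)
  have hinj : ∀ x y : Fin (n+2) → ℝ, Monotone x → Monotone y → F x = F y → x = y := by
    intro x y hx hy h
    apply monotone_eq_of_coeffVec (n+2) x y hx hy
    rw [← hCoefPS x, ← hCoefPS y, h]
  -- separation of the pair from the rest
  have hii : xs i0 ≤ xs i1 := hmono (by simp [hi0, hi1, Fin.mk_le_mk])
  have hsep : ∀ j : Fin n, xs (embd n i j) < xs i0 ∨ xs i1 < xs (embd n i j) := by
    intro j
    by_cases hj : (j : ℕ) < i
    · left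
      have hemb : embd n i j = ⟨(j : ℕ), by omega⟩ := by rw [embd, if_pos hj]
      have h1 : xs ⟨(j : ℕ), by omega⟩ ≤ xs ⟨i - 1, by omega⟩ :=
        hmono (by rw [Fin.mk_le_mk]; omega)
      have h2 : xs ⟨i - 1, by omega⟩ < xs i0 := hleft ⟨i - 1, by omega⟩ (by simp; omega)
      rw [hemb]
      exact lt_of_le_of_lt h1 h2
    · right
      have hjn : (j : ℕ) < n := j.2
      have hemb : embd n i j = ⟨(j : ℕ) + 2, by omega⟩ := by rw [embd, if_neg hj]
      have h2 : xs i1 < xs ⟨i + 2, by omega⟩ := hright ⟨i + 2, by omega⟩ (by simp)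
      have h1 : xs ⟨i + 2, by omega⟩ ≤ xs ⟨(j : ℕ) + 2, by omega⟩ :=
        hmono (by rw [Fin.mk_le_mk]; omega)
      rw [hemb]
      exact lt_of_lt_of_le h2 h1
  -- coprimality at the base point
  have hcop : IsCoprime (qpoly n (Tmap n i hi xs)) (rpoly n (Tmap n i hi xs)) := by
    rw [qpoly_Tmap, rpoly_Tmap]
    apply IsCoprime.mul_left
    · apply IsCoprime.prod_right
      intro j _
      apply Polynomial.isCoprime_X_sub_C_of_isUnit_sub
      apply IsUnit.mk0
      rcases hsep j with h | h
      · have : xs (embd n i j) < xs i0 := h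
        intro hc
        rw [sub_eq_zero] at hc
        rw [hc] at this
        exact lt_irrefl _ this
      · intro hc
        rw [sub_eq_zero] at hc
        have := lt_of_lt_of_le h (hc ▸ hii)
        exact lt_irrefl _ (lt_of_le_of_lt hii (hc ▸ h))
    · apply IsCoprime.prod_right
      intro j _
      apply Polynomial.isCoprime_X_sub_C_of_isUnit_sub
      apply IsUnit.mk0
      rcases hsep j with h | h
      · intro hc
        rw [sub_eq_zero] at hc
        exact lt_irrefl _ (lt_of_le_of_lt (hc ▸ hii) h)
      · intro hc
        rw [sub_eq_zero] at hc
        rw [← hc] at h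
        exact lt_irrefl _ h
  obtain ⟨W, hWopen, hWmem, Γ, hΓ, V, hVopen, hVmem, hVinv⟩ :=
    CoefM_localInverse n (Tmap n i hi xs) hcop
  -- radius from continuity of Tmap
  have hTV : (Tmap n i hi) ⁻¹' V ∈ nhds xs :=
    (continuous_Tmap n i hi).continuousAt.preimage_mem_nhds (hVopen.mem_nhds hVmem)
  obtain ⟨ε, hε, hball⟩ := Metric.mem_nhds_iff.1 hTV
  -- compact exclusion set
  set Cb : ℝ := psumR (n+2) xs 2 + 1 with hCb
  set R : ℝ := Real.sqrt Cb with hR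
  set K : Set (Fin (n+2) → ℝ) :=
    {x | Monotone x ∧ ε ≤ dist x xs ∧ ∀ j, |x j| ≤ R} with hK
  have hKclosed : IsClosed K := by
    have hm : IsClosed {x : Fin (n+2) → ℝ | Monotone x} := by
      have : {x : Fin (n+2) → ℝ | Monotone x}
          = ⋂ (p : Fin (n+2) × Fin (n+2)) (_ : p.1 ≤ p.2), {x | x p.1 ≤ x p.2} := by
        ext x
        simp only [Set.mem_setOf_eq, Set.mem_iInter]
        exact ⟨fun h p hp => h hp, fun h a b hab => h (a, b) hab⟩
      rw [this]
      exact isClosed_iInter fun p => isClosed_iInter fun _ =>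
        isClosed_le (continuous_apply _) (continuous_apply _)
    have hd : IsClosed {x : Fin (n+2) → ℝ | ε ≤ dist x xs} :=
      isClosed_le continuous_const (continuous_id.dist continuous_const)
    have hb : IsClosed {x : Fin (n+2) → ℝ | ∀ j, |x j| ≤ R} := by
      have : {x : Fin (n+2) → ℝ | ∀ j, |x j| ≤ R} = ⋂ j, {x | |x j| ≤ R} := by
        ext x; simp
      rw [this]
      exact isClosed_iInter fun j => isClosed_le (continuous_apply j).abs continuous_const
    exact (hm.inter (hd.inter hb))
  have hKcompact : IsCompact K := by
    apply IsCompact.of_isClosed_subset (isCompact_closedBall (0 : Fin (n+2) → ℝ) R) hKclosed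
    intro x hx
    rw [Metric.mem_closedBall, dist_zero_right]
    rw [pi_norm_le_iff_of_nonneg (Real.sqrt_nonneg _)]
    intro j
    rw [Real.norm_eq_abs]
    exact hx.2.2 j
  have hFKclosed : IsClosed (F '' K) := (hKcompact.image hFcont).isClosed
  have hxsK : F xs ∉ F '' K := by
    rintro ⟨y, hy, heq⟩
    have := hinj y xs hy.1 hmono heq
    rw [this] at hy
    have := hy.2.1
    rw [dist_self] at this
    linarith
  -- the open set and the function
  set U : Set (Fin (n+2) → ℝ) :=
    (CoefOfPS (n+2) ⁻¹' W) ∩ {u | u ⟨1, by omega⟩ < Cb} ∩ (F '' K)ᶜ with hU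
  have hUopen : IsOpen U := by
    apply IsOpen.inter
    apply IsOpen.inter
    · exact hWopen.preimage (contDiff_CoefOfPS (n+2)).continuous
    · exact isOpen_lt (continuous_apply _) continuous_const
    · exact hFKclosed.isOpen_compl
  have hFxsW : CoefOfPS (n+2) (F xs) ∈ W := by
    rw [hCoefPS xs, ← CoefM_Tmap n i hi xs]
    exact hWmem
  have hFxsU : F xs ∈ U := by
    refine ⟨⟨hFxsW, ?_⟩, hxsK⟩
    show F xs ⟨1, by omega⟩ < Cb
    rw [hFx xs ⟨1, by omega⟩]
    have : ((⟨1, by omega⟩ : Fin (n+2)) : ℕ) = 1 := rfl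
    rw [this, hCb]
    linarith
  refine ⟨U, hUopen, hFxsU, fun u => -(Γ (CoefOfPS (n+2) u) ⟨1, by omega⟩), ?_, ?_⟩
  · -- smoothness
    have hsub : U ⊆ CoefOfPS (n+2) ⁻¹' W := fun u hu => hu.1.1
    have h1 : ContDiffOn ℝ (⊤ : ℕ∞) (fun u => Γ (CoefOfPS (n+2) u)) U :=
      hΓ.comp ((contDiff_CoefOfPS (n+2)).contDiffOn) hsub
    have h2 : ContDiffOn ℝ (⊤ : ℕ∞) (fun u => Γ (CoefOfPS (n+2) u) ⟨1, by omega⟩) U :=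
      (ContinuousLinearMap.proj (R := ℝ) (φ := fun _ : Fin (n+2) => ℝ)
        ⟨1, by omega⟩).contDiff.comp_contDiffOn h1
    exact h2.neg
  · -- correctness
    intro x hxm hxU
    obtain ⟨⟨hW', hC'⟩, hK'⟩ := hxU
    have hpsum2 : psumR (n+2) x 2 < Cb := by
      have := hC'
      simp only [Set.mem_setOf_eq] at this
      rw [hFx x ⟨1, by omega⟩] at this
      exact this
    have hb : ∀ j, |x j| ≤ R := by
      intro j
      have hsq : x j ^ 2 ≤ psumR (n+2) x 2 := by
        rw [psumR]
        exact Finset.single_le_sum (fun m _ => sq_nonneg (x m)) (mem_univ j)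
      exact Real.abs_le_sqrt (le_of_lt (lt_of_le_of_lt hsq hpsum2))
    have hdist : dist x xs < ε := by
      by_contra hge
      push_neg at hge
      exact hK' ⟨x, ⟨hxm, hge, hb⟩, rfl⟩
    have hTx : Tmap n i hi x ∈ V := hball (Metric.mem_ball.2 hdist)
    have hΓx : Γ (CoefOfPS (n+2) (F x)) = Tmap n i hi x := by
      rw [hCoefPS x, ← CoefM_Tmap n i hi x]
      exact hVinv _ hTx
    show -(Γ (CoefOfPS (n+2) (F x)) ⟨1, by omega⟩) = _
    rw [hΓx]
    have hv1 : ((⟨1, by omega⟩ : Fin (n+2)) : ℕ) = 1 := rfl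
    rw [Tmap, hv1]
    norm_num
    rfl
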